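/- Let Y = ((E;O);(B₁;B₂)) be a real 2×2×2×2 tensor whose first 2×2×2 slice consists of the identity matrix E and the zero matrix O, and second slice of arbitrary 2×2 real matrices B₁, B₂. Then rank_ℝ(Y) ≤ 4. -/

import Mathlib

open Matrix BigOperators

/-- Cayley hyperdeterminant (up to sign) of a 2×2×2 tensor given by matrix slices A, B. -/
noncomputable def Delta {F : Type*} [Field F] (A B : Matrix (Fin 2) (Fin 2) F) : F :=
  ((A + B).det - (A - B).det) ^ 2 / 4 - 4 * A.det * B.det

/-- Rank of a 2×2×2 tensor, given as a pair of 2×2 matrix slices. -/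
noncomputable def trank3 {F : Type*} [Field F] (T : Fin 2 → Matrix (Fin 2) (Fin 2) F) : ℕ :=
  sInf {r | ∃ u v w : Fin r → Fin 2 → F, ∀ k i j, T k i j = ∑ s, u s k * v s i * w s j}

/-- Rank of a 2×2×2×2 tensor, given as a 2×2 array of 2×2 matrix slices. -/
noncomputable def trank4 {F : Type*} [Field F] (T : Fin 2 → Fin 2 → Matrix (Fin 2) (Fin 2) F) : ℕ :=
  sInf {r | ∃ u v w z : Fin r → Fin 2 → F,
    ∀ k l i j, T k l i j = ∑ s, u s k * v s l * w s i * z s j}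

/-- The 2×2 matrix with columns u and v. -/
def col2 {F : Type*} [Field F] (u v : Fin 2 → F) : Matrix (Fin 2) (Fin 2) F :=
  Matrix.of fun i j => ![u, v] j i

/-!
Write `1 = P + Q` with `P`, `Q` of rank at most one and `B₂ = α' N₂ + β' N₃` with `N₂`, `N₃` of
rank at most one. If moreover `B₁ - α N₂ - β N₃ = a P + b Q`, the tensor is the sum of the four
rank-one tensors `(1, a) ⊗ (1, 0) ⊗ P`, `(1, b) ⊗ (1, 0) ⊗ Q`, `(0, 1) ⊗ (α, α') ⊗ N₂` and
`(0, 1) ⊗ (β, β') ⊗ N₃`. Such `P`, `Q` are the spectral projections of `B₁ - α N₂ - β N₃` as soon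
as this matrix has two distinct eigenvalues in the field. If `B₂` is singular, take `N₃ = B₂` and
`N₂ = B₁ - U` with `U` triangular with diagonal `(a, a - 1)`. If `B₂` is invertible, take for
`N₂`, `N₃` its two rows; rescaling them suitably makes the discriminant of `B₁ - diag(α, β) B₂`
positive.
-/

section Field

variable {F : Type*} [Field F]

theorem exists_eq_vecMulVec_of_det_eq_zero {A : Matrix (Fin 2) (Fin 2) F} (h : A.det = 0) :
    ∃ w z : Fin 2 → F, A = vecMulVec w z := by
  rw [det_fin_two] at h
  by_cases h00 : A 0 0 = 0
  · by_cases h01 : A 0 1 = 0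
    · refine ⟨![0, 1], A 1, ?_⟩
      ext i j
      fin_cases i <;> fin_cases j <;> simp [vecMulVec_apply, h00, h01]
    · have h10 : A 1 0 = 0 := by simpa [h00, h01] using h
      refine ⟨fun i => A i 1, ![0, 1], ?_⟩
      ext i j
      fin_cases i <;> fin_cases j <;> simp [vecMulVec_apply, h00, h10]
  · refine ⟨fun i => A i 0, ![1, A 0 1 / A 0 0], ?_⟩
    ext i j
    fin_cases i <;> fin_cases j <;>
      simp only [Fin.zero_eta, Fin.mk_one, vecMulVec_apply, cons_val_zero, cons_val_one, mul_one]
    · field_simp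
    · field_simp
      linear_combination h

theorem exists_spectral_decomposition_fin_two {M : Matrix (Fin 2) (Fin 2) F} {a b : F}
    (hab : a ≠ b) (htr : M.trace = a + b) (hdet : M.det = a * b) :
    ∃ P Q : Matrix (Fin 2) (Fin 2) F, P.det = 0 ∧ Q.det = 0 ∧ P + Q = 1 ∧ M = a • P + b • Q := by
  have hab' : a - b ≠ 0 := sub_ne_zero.mpr hab
  have hba : b - a ≠ 0 := sub_ne_zero.mpr hab.symm
  have det_sub_smul_one (c : F) : (M - c • 1).det = c ^ 2 - M.trace * c + M.det := by
    rw [det_fin_two, det_fin_two, trace_fin_two]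
    simp only [Matrix.sub_apply, Matrix.smul_apply, one_apply_eq, one_apply_ne zero_ne_one,
      one_apply_ne one_ne_zero, smul_eq_mul]
    ring
  refine ⟨(a - b)⁻¹ • (M - b • 1), (b - a)⁻¹ • (M - a • 1), ?_, ?_, ?_, ?_⟩
  · rw [det_smul, det_sub_smul_one, htr, hdet]
    ring
  · rw [det_smul, det_sub_smul_one, htr, hdet]
    ring
  · match_scalars <;> field_simp <;> ring
  · match_scalars <;> field_simp <;> ring

theorem trank4_le_four_of_decomposition {B₁ B₂ P Q N₂ N₃ : Matrix (Fin 2) (Fin 2) F}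
    (a b α β α' β' : F)
    (hP : P.det = 0) (hQ : Q.det = 0) (hN₂ : N₂.det = 0) (hN₃ : N₃.det = 0) (hPQ : P + Q = 1)
    (hB₁ : B₁ = a • P + b • Q + α • N₂ + β • N₃) (hB₂ : B₂ = α' • N₂ + β' • N₃) :
    trank4 ![![1, 0], ![B₁, B₂]] ≤ 4 := by
  obtain ⟨w₀, z₀, rfl⟩ := exists_eq_vecMulVec_of_det_eq_zero hP
  obtain ⟨w₁, z₁, rfl⟩ := exists_eq_vecMulVec_of_det_eq_zero hQ
  obtain ⟨w₂, z₂, rfl⟩ := exists_eq_vecMulVec_of_det_eq_zero hN₂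
  obtain ⟨w₃, z₃, rfl⟩ := exists_eq_vecMulVec_of_det_eq_zero hN₃
  subst hB₁ hB₂
  rw [← hPQ]
  refine Nat.sInf_le ⟨![![1, a], ![1, b], ![0, 1], ![0, 1]],
    ![![1, 0], ![1, 0], ![α, α'], ![β, β']], ![w₀, w₁, w₂, w₃], ![z₀, z₁, z₂, z₃],
    fun k l i j => ?_⟩
  fin_cases k <;> fin_cases l <;> simp [vecMulVec_apply, Fin.sum_univ_four] <;> ring

theorem trank4_le_four_of_det_eq_zero {B₁ B₂ : Matrix (Fin 2) (Fin 2) F} (h : B₂.det = 0) :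
    trank4 ![![1, 0], ![B₁, B₂]] ≤ 4 := by
  set U := !![B₁ 0 0, B₁ 0 1; 0, B₁ 0 0 - 1]
  have hN : (B₁ - U).det = 0 := by simp [U, det_fin_two]
  obtain ⟨P, Q, hP, hQ, hPQ, hU⟩ := exists_spectral_decomposition_fin_two (M := U)
    (a := B₁ 0 0) (b := B₁ 0 0 - 1) (by simp [eq_sub_iff_add_eq])
    (by simp [U, trace_fin_two]) (by simp [U, det_fin_two])
  refine trank4_le_four_of_decomposition (B₁ 0 0) (B₁ 0 0 - 1) 1 0 0 1 hP hQ hN h hPQ ?_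
    (by simp)
  rw [← hU, one_smul, zero_smul, add_zero, add_sub_cancel]

end Field

theorem discr_fin_two_eq {R : Type*} [CommRing R] (M : Matrix (Fin 2) (Fin 2) R) :
    M.discr = (M 0 0 - M 1 1) ^ 2 + 4 * M 0 1 * M 1 0 := by
  rw [discr_fin_two, trace_fin_two, det_fin_two]
  ring

theorem exists_ne_of_sq_sub_four_mul_pos {t d : ℝ} (h : 0 < t ^ 2 - 4 * d) :
    ∃ a b : ℝ, a ≠ b ∧ t = a + b ∧ d = a * b := by
  refine ⟨(t + √(t ^ 2 - 4 * d)) / 2, (t - √(t ^ 2 - 4 * d)) / 2, ?_, by ring, ?_⟩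
  · linarith [Real.sqrt_pos.mpr h]
  · linear_combination Real.sq_sqrt h.le / 4

theorem sq_add_four_mul_pos (b c : ℝ) : 0 < (|b| + |c| + 1) ^ 2 + 4 * b * c := by
  nlinarith [abs_nonneg b, abs_nonneg c, abs_mul_abs_self b, abs_mul b c, neg_abs_le (b * c),
    sq_nonneg (|b| - |c|)]

theorem exists_discr_pos_sub_diagonal_mul (B₁ : Matrix (Fin 2) (Fin 2) ℝ)
    {B₂ : Matrix (Fin 2) (Fin 2) ℝ} (h : B₂.det ≠ 0) :
    ∃ α β : ℝ, 0 < (B₁ - diagonal ![α, β] * B₂).discr := by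
  simp only [discr_fin_two_eq, Matrix.sub_apply, diagonal_mul, cons_val_zero, cons_val_one]
  rw [det_fin_two] at h
  -- If `B₂` has a zero off-diagonal entry, one row scaling sets the diagonal gap to `K`, and
  -- `K ^ 2` beats `4 * B₁ 0 1 * B₁ 1 0`; otherwise the row scalings make both off-diagonal
  -- entries `1`.
  set K := |B₁ 0 1| + |B₁ 1 0| + 1
  by_cases hf : B₂ 0 1 = 0
  · have he : B₂ 0 0 ≠ 0 := by rintro he; simp [he, hf] at h
    refine ⟨(B₁ 0 0 - B₁ 1 1 - K) / B₂ 0 0, 0, ?_⟩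
    have hα : B₁ 0 0 - (B₁ 0 0 - B₁ 1 1 - K) / B₂ 0 0 * B₂ 0 0 = B₁ 1 1 + K := by
      field_simp; ring
    rw [hα, hf]
    convert sq_add_four_mul_pos (B₁ 0 1) (B₁ 1 0) using 1
    ring
  by_cases hg : B₂ 1 0 = 0
  · have hh : B₂ 1 1 ≠ 0 := by rintro hh; simp [hh, hg] at h
    refine ⟨0, (B₁ 1 1 - B₁ 0 0 + K) / B₂ 1 1, ?_⟩
    have hβ : B₁ 1 1 - (B₁ 1 1 - B₁ 0 0 + K) / B₂ 1 1 * B₂ 1 1 = B₁ 0 0 - K := by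
      field_simp; ring
    rw [hβ, hg]
    convert sq_add_four_mul_pos (B₁ 0 1) (B₁ 1 0) using 1
    ring
  refine ⟨(B₁ 0 1 - 1) / B₂ 0 1, (B₁ 1 0 - 1) / B₂ 1 0, ?_⟩
  have hα : B₁ 0 1 - (B₁ 0 1 - 1) / B₂ 0 1 * B₂ 0 1 = 1 := by field_simp; ring
  have hβ : B₁ 1 0 - (B₁ 1 0 - 1) / B₂ 1 0 * B₂ 1 0 = 1 := by field_simp; ring
  rw [hα, hβ]
  positivity

theorem trank4_le_four_of_det_ne_zero {B₁ B₂ : Matrix (Fin 2) (Fin 2) ℝ} (h : B₂.det ≠ 0) :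
    trank4 ![![1, 0], ![B₁, B₂]] ≤ 4 := by
  set N₀ := diagonal ![1, 0] * B₂
  set N₁ := diagonal ![0, 1] * B₂
  have hrows (c d : ℝ) : diagonal ![c, d] * B₂ = c • N₀ + d • N₁ := by
    ext i j
    fin_cases i <;> simp [N₀, N₁, diagonal_mul]
  obtain ⟨α, β, hpos⟩ := exists_discr_pos_sub_diagonal_mul B₁ h
  rw [discr_fin_two] at hpos
  obtain ⟨a, b, hab, htr, hdet⟩ := exists_ne_of_sq_sub_four_mul_pos hpos
  obtain ⟨P, Q, hP, hQ, hPQ, hM⟩ := exists_spectral_decomposition_fin_two hab htr hdet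
  have hN₀ : N₀.det = 0 := by simp [N₀, det_diagonal]
  have hN₁ : N₁.det = 0 := by simp [N₁, det_diagonal]
  refine trank4_le_four_of_decomposition a b α β 1 1 hP hQ hN₀ hN₁ hPQ ?_ ?_
  · rw [add_assoc, ← hrows, ← hM, sub_add_cancel]
  · rw [← hrows]
    ext i j
    fin_cases i <;> simp [diagonal_mul]

theorem stmt13 (B₁ B₂ : Matrix (Fin 2) (Fin 2) ℝ) :
    trank4 ![![(1 : Matrix (Fin 2) (Fin 2) ℝ), 0], ![B₁, B₂]] ≤ 4 := by
  by_cases h : B₂.det = 0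
  · exact trank4_le_four_of_det_eq_zero h
  · exact trank4_le_four_of_det_ne_zero h
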